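/- For every non-degenerate Farey word s = s_1…s_m, the conjugate word φ(s) := the reflection of L(s) (i.e., replace every digit x of the largest cyclic rotation of s by 1−x) is again a non-degenerate Farey word, and it equals 0 (1−s_2) (1−s_3) … (1−s_{m−1}) 1. Moreover φ(φ(s)) = s. -/

import Mathlib

/-- The cyclic rotation of a binary word `c` by `i`: `c_{i+1}…c_m c_1…c_i`. -/
def rot (c : List Bool) (i : ℕ) : List Bool := c.drop i ++ c.take i

/-- The lexicographically largest cyclic rotation `L(s)` of `s`. -/
def maxRot (s : List Bool) : List Bool :=
  (List.range s.length).foldl (fun acc i => max acc (rot s i)) s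

/-- The lexicographically smallest cyclic rotation `S(s)` of `s`. -/
def minRot (s : List Bool) : List Bool :=
  (List.range s.length).foldl (fun acc i => min acc (rot s i)) s

/-- A binary word is Lyndon if every proper suffix is strictly lexicographically
greater than the prefix of the same length. -/
def IsLyndon (s : List Bool) : Prop :=
  ∀ i, 0 < i → i < s.length → s.take (s.length - i) < s.drop i

/-- One step of the Farey-word construction: insert `w v` between neighbors `w, v`. -/
def fareyStep : List (List Bool) → List (List Bool)
  | [] => []
  | [w] => [w]
  | w :: v :: rest => w :: (w ++ v) :: fareyStep (v :: rest)

/-- The ordered sets `F_n` of Farey words, with `F_0 = (0, 1)`. -/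
def farey : ℕ → List (List Bool)
  | 0 => [[false], [true]]
  | n + 1 => fareyStep (farey n)

/-- A Farey word is an element of some `F_n`. -/
def IsFarey (w : List Bool) : Prop := ∃ n, w ∈ farey n

/-- A non-degenerate Farey word: a Farey word other than the single letters `0` and `1`,
equivalently of length at least two. -/
def IsFareyND (w : List Bool) : Prop := IsFarey w ∧ 2 ≤ w.length

/-- The reflection of a binary word: each digit `x` is replaced by `1 − x`. -/
def reflectWord (w : List Bool) : List Bool := w.map fun b => !b

/-- The conjugate `φ(s)` of a word: the reflection of its largest cyclic rotation. -/
def conj (s : List Bool) : List Bool := reflectWord (maxRot s)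

/-! ### Auxiliary development -/

section Aux

open List

/-! #### Lexicographic order plumbing -/

lemma list_lt_iff {a b : List Bool} : a < b ↔ List.Lex (· < ·) a b := Iff.rfl

lemma bool_lt {a b : Bool} (h : a < b) : a = false ∧ b = true := by
  cases a <;> cases b <;> revert h <;> decide

/-- Strict lexicographic comparison of equal-length lists survives appending. -/
lemma lex_append {a b : List Bool} (h : List.Lex (· < ·) a b)
    (hl : a.length = b.length) (c d : List Bool) :
    List.Lex (· < ·) (a ++ c) (b ++ d) := by
  induction h generalizing c d with
  | nil => simp at hl
  | cons h ih => exact List.Lex.cons (ih (by simpa using hl) c d)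
  | rel h => exact List.Lex.rel h

lemma lex_append_right {u : List Bool} (v : List Bool) (hv : v ≠ []) :
    List.Lex (· < ·) u (u ++ v) := by
  induction u with
  | nil =>
    cases v with
    | nil => exact absurd rfl hv
    | cons a l => exact List.Lex.nil
  | cons a l ih => exact List.Lex.cons (by simpa using ih)

lemma lex_of_not_prefix {a b : List Bool} (h : List.Lex (· < ·) a b)
    (hp : ¬ a <+: b) (c : List Bool) : List.Lex (· < ·) (a ++ c) b := by
  induction h generalizing c with
  | nil => exact absurd (List.nil_prefix) hp
  | cons h ih =>
    exact List.Lex.cons (ih (fun hc => hp (List.cons_prefix_cons.mpr ⟨rfl, hc⟩)) c)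
  | rel h => exact List.Lex.rel h

lemma lex_take {a b : List Bool} (h : List.Lex (· < ·) a b)
    (hl : b.length ≤ a.length) : List.Lex (· < ·) (a.take b.length) b := by
  induction h with
  | nil => simp at hl
  | @cons c l₁ l₂ h ih =>
    simpa using List.Lex.cons (a := c) (ih (by simpa using hl))
  | rel h => exact List.Lex.rel h

lemma le_cons_cons {a : Bool} {l l' : List Bool} (h : l ≤ l') : a :: l ≤ a :: l' := by
  rw [← not_lt] at h ⊢
  intro hc
  exact h (List.lex_cons_iff.mp (list_lt_iff.mp hc))

lemma take_le_take {a b : List Bool} (h : List.Lex (· < ·) a b) :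
    ∀ k, a.take k ≤ b.take k := by
  induction h with
  | nil => intro k; rw [List.take_nil, ← not_lt]; exact fun h => List.not_lex_nil (list_lt_iff.mp h)
  | @cons c l₁ l₂ h ih =>
    intro k
    cases k with
    | zero => simp
    | succ k => simpa using le_cons_cons (ih k)
  | @rel a₁ l₁ a₂ l₂ h =>
    intro k
    cases k with
    | zero => simp
    | succ k => exact le_of_lt (list_lt_iff.mpr (List.Lex.rel h))

/-! #### Lyndon word lemmas -/

lemma append_lt {u v : List Bool} (hu : u ≠ []) (huv : u < v) (hv : IsLyndon v) :
    u ++ v < v := by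
  rw [list_lt_iff] at huv ⊢
  by_cases hp : u <+: v
  · obtain ⟨t, rfl⟩ := hp
    have ht : t ≠ [] := by
      rintro rfl
      simp at huv
    have hlt : 0 < u.length := List.length_pos_iff.mpr hu
    have hlen : u.length < (u ++ t).length := by
      simp [List.length_append]
      exact List.length_pos_iff.mpr ht
    have h0 := hv u.length hlt hlen
    rw [list_lt_iff] at h0
    have hdrop : (u ++ t).drop u.length = t := List.drop_left
    have hlen2 : (u ++ t).length - u.length = t.length := by
      simp [List.length_append]
    rw [hdrop, hlen2] at h0
    -- h0 : Lex ((u++t).take t.length) t,  goal : Lex (u ++ (u++t)) (u ++ t)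
    have htk : t.length ≤ (u ++ t).length := by simp [List.length_append]
    have hvt : List.Lex (· < ·) (u ++ t) t := by
      have := lex_append h0 (by simp [List.length_take, min_eq_left htk]) ((u ++ t).drop t.length) []
      simpa [List.take_append_drop] using this
    have := List.Lex.append_left (· < ·) hvt u
    simpa [List.append_assoc] using this
  · exact lex_of_not_prefix huv hp v

lemma lyndon_append {u v : List Bool} (hu : IsLyndon u) (hv : IsLyndon v)
    (hune : u ≠ []) (hvne : v ≠ []) (huv : u < v) : IsLyndon (u ++ v) := by
  intro i hi0 hi
  have hp0 : 0 < u.length := List.length_pos_iff.mpr hune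
  have hq0 : 0 < v.length := List.length_pos_iff.mpr hvne
  have hlen : (u ++ v).length = u.length + v.length := by simp
  rw [hlen] at hi ⊢
  rw [list_lt_iff]
  by_cases hcase : i < u.length
  · -- rotation point inside u
    have hdrop : (u ++ v).drop i = u.drop i ++ v := by
      rw [List.drop_append]
      have h1 : i - u.length = 0 := by omega
      simp [h1]
    have e1 : u.length + v.length - i = (u.length - i) + v.length := by omega
    have htake : (u ++ v).take (u.length + v.length - i) =
        u.take (u.length - i) ++ ((u ++ v).drop (u.length - i)).take v.length := by
      rw [e1, List.take_add]
      congr 1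
      rw [List.take_append]
      have h2 : u.length - i - u.length = 0 := by omega
      simp [h2]
    rw [hdrop, htake]
    have h0 := hu i hi0 hcase
    rw [list_lt_iff] at h0
    have hlen0 : (u.take (u.length - i)).length = (u.drop i).length := by
      simp [List.length_take, List.length_drop]
    exact lex_append h0 hlen0 _ v
  · -- rotation point inside v
    push_neg at hcase
    have hjq : i - u.length < v.length := by omega
    have hdrop : (u ++ v).drop i = v.drop (i - u.length) := by
      rw [List.drop_append]
      rw [List.drop_eq_nil_of_le (by omega : u.length ≤ i)]
      simp
    rw [hdrop]
    have huvv : List.Lex (· < ·) (u ++ v) v :=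
      list_lt_iff.mp (append_lt hune huv hv)
    by_cases hj0 : i - u.length = 0
    · have harith : u.length + v.length - i = v.length := by omega
      rw [harith, hj0, List.drop_zero]
      exact lex_take huvv (by simp)
    · have h0 := hv (i - u.length) (by omega) hjq
      rw [list_lt_iff] at h0
      have harith : u.length + v.length - i = v.length - (i - u.length) := by omega
      rw [harith]
      have h1 : (u ++ v).take (v.length - (i - u.length)) ≤ v.take (v.length - (i - u.length)) :=
        take_le_take huvv _
      have h2 : v.take (v.length - (i - u.length)) < v.drop (i - u.length) := by
        rw [list_lt_iff]; exact h0
      exact list_lt_iff.mp (lt_of_le_of_lt h1 h2)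

lemma lyndon_lt_rot {s : List Bool} (hs : IsLyndon s) {i : ℕ} (hi0 : 0 < i)
    (hi : i < s.length) : s < rot s i := by
  have h0 := hs i hi0 hi
  rw [list_lt_iff] at h0 ⊢
  have hlen0 : (s.take (s.length - i)).length = (s.drop i).length := by
    simp [List.length_take, List.length_drop]
  have := lex_append h0 hlen0 (s.drop (s.length - i)) (s.take i)
  rw [List.take_append_drop] at this
  exact this

lemma rot_zero (s : List Bool) : rot s 0 = s := by simp [rot]

lemma lyndon_le_rot {s : List Bool} (hs : IsLyndon s) {i : ℕ} (hi : i < s.length) :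
    s ≤ rot s i := by
  rcases Nat.eq_zero_or_pos i with h | h
  · subst h; rw [rot_zero]
  · exact le_of_lt (lyndon_lt_rot hs h hi)

/-! #### rot lemmas -/

lemma length_rot (s : List Bool) (i : ℕ) : (rot s i).length = s.length := by
  simp [rot, List.length_take, List.length_drop]
  omega

lemma rot_eq_rotate {s : List Bool} {i : ℕ} (h : i ≤ s.length) :
    rot s i = s.rotate i := (List.rotate_eq_drop_append_take h).symm

lemma rot_append (A B : List Bool) : rot (A ++ B) A.length = B ++ A := by
  simp [rot, List.drop_left, List.take_left]

/-! #### reflectWord lemmas -/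

@[simp] lemma reflect_nil : reflectWord [] = [] := rfl

@[simp] lemma reflect_cons (a : Bool) (l : List Bool) :
    reflectWord (a :: l) = (!a) :: reflectWord l := rfl

@[simp] lemma reflect_append (a b : List Bool) :
    reflectWord (a ++ b) = reflectWord a ++ reflectWord b := by
  simp [reflectWord]

@[simp] lemma reflect_length (a : List Bool) :
    (reflectWord a).length = a.length := by simp [reflectWord]

@[simp] lemma reflect_reflect (a : List Bool) : reflectWord (reflectWord a) = a := by
  simp [reflectWord, List.map_map, Function.comp_def, Bool.not_not]

lemma reflect_reverse (a : List Bool) :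
    reflectWord a.reverse = (reflectWord a).reverse := by
  simp [reflectWord, List.map_reverse]

lemma reflect_rot (s : List Bool) (i : ℕ) :
    reflectWord (rot s i) = rot (reflectWord s) i := by
  simp [rot, reflectWord, ← List.map_take, ← List.map_drop]

lemma reflect_lex {a b : List Bool} (h : List.Lex (· < ·) a b)
    (hl : a.length = b.length) :
    List.Lex (· < ·) (reflectWord b) (reflectWord a) := by
  induction h with
  | nil => simp at hl
  | cons h ih => exact List.Lex.cons (ih (by simpa using hl))
  | @rel a₁ l₁ a₂ l₂ h =>
    obtain ⟨h1, h2⟩ := bool_lt h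
    subst h1; subst h2
    exact List.Lex.rel (by decide)

lemma reflect_lt_iff {a b : List Bool} (hl : a.length = b.length) :
    a < b ↔ reflectWord b < reflectWord a := by
  constructor
  · intro h
    exact list_lt_iff.mpr (reflect_lex (list_lt_iff.mp h) hl)
  · intro h
    have := reflect_lex (list_lt_iff.mp h) (by simp [hl])
    simpa [reflect_reflect] using list_lt_iff.mpr this

lemma reflect_le_iff {a b : List Bool} (hl : a.length = b.length) :
    a ≤ b ↔ reflectWord b ≤ reflectWord a := by
  rw [← not_lt, ← not_lt, reflect_lt_iff hl.symm]

end Aux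

/-! ### Standard pairs and their invariants -/

section Pairs

open List

/-- The invariant carried by neighboring pairs in the Farey list: both are
Lyndon, ordered, of the shape `0…`, `…1`, with a family of combinatorial
identities of Christoffel standard pairs. -/
def GoodPair (u v : List Bool) : Prop :=
  IsLyndon u ∧ IsLyndon v ∧ u < v ∧
  ∃ x y : List Bool, u = false :: x ∧ v = y ++ [true] ∧
    (∀ z, y ++ false :: (x.reverse ++ z) = false :: (x ++ (y ++ z))) ∧
    (∀ z, x ++ (y ++ true :: z) = y.reverse ++ true :: (x ++ z)) ∧
    (∀ z, y.reverse ++ (x.reverse ++ z) = x ++ (y ++ z)) ∧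
    (∀ z, x.reverse ++ true :: z = true :: (x ++ z)) ∧
    (∀ z, y ++ false :: z = false :: (y.reverse ++ z))

lemma goodPair_base : GoodPair [false] [true] := by
  refine ⟨?_, ?_, by decide, [], [], rfl, rfl, ?_, ?_, ?_, ?_, ?_⟩
  · intro i h1 h2; simp at h2; omega
  · intro i h1 h2; simp at h2; omega
  all_goals intro z; simp

lemma goodPair_left {u v : List Bool} (h : GoodPair u v) : GoodPair u (u ++ v) := by
  obtain ⟨hLu, hLv, huv, x, y, hux, hvy, hA1, hA2, hA3, hA4, hA5⟩ := h
  have hune : u ≠ [] := by rw [hux]; simp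
  have hvne : v ≠ [] := by rw [hvy]; simp
  refine ⟨hLu, lyndon_append hLu hLv hune hvne huv,
    list_lt_iff.mpr (lex_append_right v hvne), x, false :: (x ++ y), hux, ?_, ?_, ?_, ?_, hA4, ?_⟩
  · rw [hux, hvy]; simp [List.append_assoc]
  · -- A1 for the new pair
    intro z
    simp only [List.cons_append, List.nil_append, List.append_assoc]
    rw [hA1]
  · -- A2 for the new pair
    intro z
    simp only [List.reverse_cons, List.reverse_append, List.reverse_nil, List.nil_append, List.cons_append, List.append_assoc]
    rw [hA2, ← hA5, hA3]
  · -- A3 for the new pair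
    intro z
    simp only [List.reverse_cons, List.reverse_append, List.reverse_nil, List.nil_append, List.cons_append, List.append_assoc]
    rw [hA3, hA1]
  · -- A5 for the new pair
    intro z
    simp only [List.reverse_cons, List.reverse_append, List.reverse_nil, List.nil_append, List.cons_append, List.append_assoc]
    rw [hA3]

lemma goodPair_right {u v : List Bool} (h : GoodPair u v) : GoodPair (u ++ v) v := by
  obtain ⟨hLu, hLv, huv, x, y, hux, hvy, hA1, hA2, hA3, hA4, hA5⟩ := h
  have hune : u ≠ [] := by rw [hux]; simp
  have hvne : v ≠ [] := by rw [hvy]; simp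
  refine ⟨lyndon_append hLu hLv hune hvne huv, hLv, append_lt hune huv hLv,
    x ++ (y ++ [true]), y, ?_, hvy, ?_, ?_, ?_, ?_, hA5⟩
  · rw [hux, hvy]; simp [List.append_assoc]
  · -- A1 for the new pair
    intro z
    simp only [List.reverse_cons, List.reverse_append, List.reverse_nil, List.nil_append,
      List.cons_append, List.append_assoc]
    rw [hA3, hA5, hA2]
  · -- A2 for the new pair
    intro z
    simp only [List.cons_append, List.nil_append, List.append_assoc]
    rw [hA2]
  · -- A3 for the new pair
    intro z
    simp only [List.reverse_cons, List.reverse_append, List.reverse_nil, List.nil_append,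
      List.cons_append, List.append_assoc]
    rw [hA3, ← hA2]
  · -- A4 for the new pair
    intro z
    simp only [List.reverse_cons, List.reverse_append, List.reverse_nil, List.nil_append,
      List.cons_append, List.append_assoc]
    rw [hA3]

end Pairs

/-! ### Farey list machinery -/

section Farey

open List

/-- The symmetry `0 ↔ 1` of the Farey construction: reflect and reverse. -/
def sigma (w : List Bool) : List Bool := reflectWord w.reverse

lemma sigma_append (a b : List Bool) : sigma (a ++ b) = sigma b ++ sigma a := by
  simp [sigma, List.reverse_append]

lemma fareyStep_ne_nil {l : List (List Bool)} (h : l ≠ []) : fareyStep l ≠ [] := by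
  match l with
  | [] => exact absurd rfl h
  | [w] => simp [fareyStep]
  | w :: v :: rest => simp [fareyStep]

lemma fareyStep_concat (l : List (List Bool)) (a : List Bool) (h : l ≠ []) :
    fareyStep (l ++ [a]) = fareyStep l ++ [l.getLast h ++ a, a] := by
  induction l using fareyStep.induct with
  | case1 => exact absurd rfl h
  | case2 w => simp [fareyStep]
  | case3 w v rest ih =>
    have hne : v :: rest ≠ [] := by simp
    show fareyStep (w :: v :: (rest ++ [a])) = _
    rw [fareyStep]
    rw [show v :: (rest ++ [a]) = (v :: rest) ++ [a] by simp, ih hne]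
    simp [fareyStep, List.getLast_cons]

/-- `sigma` anti-commutes with `fareyStep`. -/
lemma sigma_fareyStep (l : List (List Bool)) :
    ((fareyStep l).map sigma).reverse = fareyStep ((l.map sigma).reverse) := by
  induction l using fareyStep.induct with
  | case1 => simp [fareyStep]
  | case2 w => simp [fareyStep]
  | case3 w v rest ih =>
    have hne : ((v :: rest).map sigma).reverse ≠ [] := by simp
    rw [fareyStep]
    have hlast : (((v :: rest).map sigma).reverse).getLast hne = sigma v := by
      rw [List.getLast_reverse]
      simp
    calc ((w :: (w ++ v) :: fareyStep (v :: rest)).map sigma).reverse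
        = ((fareyStep (v :: rest)).map sigma).reverse ++ [sigma (w ++ v), sigma w] := by
          simp
      _ = fareyStep (((v :: rest).map sigma).reverse) ++ [sigma v ++ sigma w, sigma w] := by
          rw [ih, sigma_append]
      _ = fareyStep (((v :: rest).map sigma).reverse ++ [sigma w]) := by
          rw [fareyStep_concat _ _ hne, hlast]
      _ = fareyStep (((w :: v :: rest).map sigma).reverse) := by simp

lemma sigma_farey (n : ℕ) : ((farey n).map sigma).reverse = farey n := by
  induction n with
  | zero => simp [farey, sigma, reflectWord]
  | succ n ih =>
    show ((fareyStep (farey n)).map sigma).reverse = fareyStep (farey n)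
    rw [sigma_fareyStep, ih]

lemma sigma_mem_farey {w : List Bool} {n : ℕ} (h : w ∈ farey n) : sigma w ∈ farey n := by
  have : sigma w ∈ ((farey n).map sigma).reverse := by
    simp only [List.mem_reverse, List.mem_map]
    exact ⟨w, h, rfl⟩
  rwa [sigma_farey] at this

lemma fareyStep_cons (v : List Bool) (rest : List (List Bool)) :
    ∃ tl, fareyStep (v :: rest) = v :: tl := by
  cases rest with
  | nil => exact ⟨[], rfl⟩
  | cons r rs => exact ⟨(v ++ r) :: fareyStep (r :: rs), rfl⟩

lemma chain'_fareyStep {l : List (List Bool)} (h : List.Chain' GoodPair l) :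
    List.Chain' GoodPair (fareyStep l) := by
  induction l using fareyStep.induct with
  | case1 => simpa [fareyStep] using h
  | case2 w => simpa [fareyStep] using h
  | case3 w v rest ih =>
    simp only [List.Chain', List.isChain_cons_cons] at h
    obtain ⟨hwv, hrest⟩ := h
    obtain ⟨tl, htl⟩ := fareyStep_cons v rest
    rw [fareyStep, htl]
    simp only [List.Chain', List.isChain_cons_cons]
    refine ⟨goodPair_left hwv, goodPair_right hwv, ?_⟩
    rw [← htl]
    exact ih hrest

lemma chain'_farey (n : ℕ) : List.Chain' GoodPair (farey n) := by
  induction n with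
  | zero =>
    show List.Chain' GoodPair [[false], [true]]
    simp [List.Chain', List.isChain_cons_cons, goodPair_base]
  | succ n ih => exact chain'_fareyStep ih

lemma mem_fareyStep_cases {l : List (List Bool)} (hc : List.Chain' GoodPair l)
    {w : List Bool} (h : w ∈ fareyStep l) :
    w ∈ l ∨ ∃ u v, GoodPair u v ∧ w = u ++ v := by
  induction l using fareyStep.induct with
  | case1 => simp [fareyStep] at h
  | case2 a => simp [fareyStep] at h; simp [h]
  | case3 a b rest ih =>
    rw [fareyStep] at h
    simp only [List.Chain', List.isChain_cons_cons] at hc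
    simp only [List.mem_cons] at h
    rcases h with h | h | h
    · exact Or.inl (by simp [h])
    · exact Or.inr ⟨a, b, hc.1, h⟩
    · rcases ih hc.2 h with h1 | h1
      · exact Or.inl (by simp [h1])
      · exact Or.inr h1

lemma farey_decomp {w : List Bool} {n : ℕ} (h : w ∈ farey n) (hlen : 2 ≤ w.length) :
    ∃ u v, GoodPair u v ∧ w = u ++ v := by
  induction n with
  | zero =>
    simp only [farey, List.mem_cons, List.not_mem_nil, or_false] at h
    rcases h with h | h <;> (rw [h] at hlen; simp at hlen)
  | succ n ih =>
    rcases mem_fareyStep_cases (chain'_farey n) h with h1 | h1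
    · exact ih h1
    · exact h1

end Farey

/-! ### Main structural facts about non-degenerate Farey words -/

section Main

open List

lemma farey_basics {s : List Bool} (h : IsFareyND s) :
    ∃ m k, s = false :: (m ++ [true]) ∧ m.reverse = m ∧ IsLyndon s ∧
      0 < k ∧ k < s.length ∧ s.reverse = rot s k := by
  obtain ⟨⟨n, hn⟩, hlen⟩ := h
  obtain ⟨u, v, hgp, rfl⟩ := farey_decomp hn hlen
  obtain ⟨hLu, hLv, huv, x, y, hux, hvy, hA1, hA2, hA3, hA4, hA5⟩ := hgp
  have hune : u ≠ [] := by rw [hux]; simp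
  have hvne : v ≠ [] := by rw [hvy]; simp
  refine ⟨x ++ y, y.length + 1, ?_, ?_, lyndon_append hLu hLv hune hvne huv, by omega, ?_, ?_⟩
  · rw [hux, hvy]; simp [List.append_assoc]
  · rw [List.reverse_append]
    simpa using hA3 []
  · rw [hux, hvy]
    simp only [List.length_append, List.length_cons]
    omega
  · have hsplit : u ++ v = (false :: y.reverse) ++ (x.reverse ++ [true]) := by
      rw [hux, hvy]
      simp only [List.cons_append, List.append_assoc, List.nil_append]
      rw [hA3]
    have hrot : rot (u ++ v) (y.length + 1) = (x.reverse ++ [true]) ++ (false :: y.reverse) := by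
      rw [hsplit, show (y.length + 1) = (false :: y.reverse).length from by simp]
      exact rot_append _ _
    rw [hrot, hux, hvy]
    simp only [List.reverse_append, List.reverse_cons, List.reverse_nil, List.nil_append,
      List.cons_append, List.append_assoc]
    rw [hA3, hA4, hA5]
    simp

lemma foldl_max_eq {f : ℕ → List Bool} {M : List Bool} :
    ∀ (l : List ℕ) (acc : List Bool), acc ≤ M → (∀ a ∈ l, f a ≤ M) →
      (acc = M ∨ ∃ a ∈ l, f a = M) →
      l.foldl (fun b a => max b (f a)) acc = M := by
  intro l
  induction l with
  | nil =>
    intro acc h1 h2 h3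
    rcases h3 with h | ⟨a, ha, _⟩
    · exact h
    · simp at ha
  | cons a l ih =>
    intro acc h1 h2 h3
    rw [List.foldl_cons]
    have hfa : f a ≤ M := h2 a (by simp)
    have h1' : max acc (f a) ≤ M := max_le h1 hfa
    have h2' : ∀ b ∈ l, f b ≤ M := fun b hb => h2 b (by simp [hb])
    rcases h3 with h | ⟨b, hb, hfb⟩
    · refine ih _ h1' h2' (Or.inl ?_)
      rw [h]
      exact max_eq_left hfa
    · simp only [List.mem_cons] at hb
      rcases hb with rfl | hb
      · refine ih _ h1' h2' (Or.inl ?_)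
        rw [hfb]
        exact max_eq_right h1
      · exact ih _ h1' h2' (Or.inr ⟨b, hb, hfb⟩)

lemma maxRot_eq_reverse {s : List Bool} (h : IsFareyND s) : maxRot s = s.reverse := by
  obtain ⟨m, k, hs, hpal, hLs, hk0, hk, hrev⟩ := farey_basics h
  obtain ⟨⟨n, hn⟩, hlen⟩ := h
  set t := reflectWord s.reverse with ht
  have htmem : t ∈ farey n := by
    have := sigma_mem_farey hn
    simpa [sigma] using this
  have htlen : t.length = s.length := by simp [ht]
  have htND : IsFareyND t := ⟨⟨n, htmem⟩, by omega⟩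
  obtain ⟨m', k', hts, hpal', hLt, hk'0, hk', hrev'⟩ := farey_basics htND
  have htrev : t.reverse = reflectWord s := by
    rw [ht, ← reflect_reverse, List.reverse_reverse]
  have hrs : reflectWord s = rot t k' := by rw [← htrev]; exact hrev'
  have dom : ∀ i < s.length, rot s i ≤ s.reverse := by
    intro i hi
    have h2 : rot (rot t k') i = rot t ((k' + i) % t.length) := by
      rw [rot_eq_rotate (le_of_lt hk')]
      rw [rot_eq_rotate (show i ≤ (t.rotate k').length by rw [List.length_rotate]; omega)]
      rw [List.rotate_rotate, ← List.rotate_mod,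
        ← rot_eq_rotate (le_of_lt (Nat.mod_lt _ (by omega)))]
    have h1 : t ≤ rot t ((k' + i) % t.length) :=
      lyndon_le_rot hLt (Nat.mod_lt _ (by omega))
    have h3 : t ≤ reflectWord (rot s i) := by
      rw [reflect_rot, hrs, h2]
      exact h1
    have hlen2 : (rot s i).length = s.reverse.length := by
      rw [length_rot]; simp
    rw [reflect_le_iff hlen2, ← ht]
    exact h3
  show (List.range s.length).foldl (fun acc i => max acc (rot s i)) s = s.reverse
  apply foldl_max_eq
  · have h0 := dom 0 (by omega)
    rwa [rot_zero] at h0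
  · intro a ha
    exact dom a (List.mem_range.mp ha)
  · exact Or.inr ⟨k, List.mem_range.mpr hk, hrev.symm⟩

end Main

/-- For every non-degenerate Farey word `s = s_1…s_m`, the conjugate `φ(s)` is again a
non-degenerate Farey word, it equals `0 (1−s_2) … (1−s_{m−1}) 1`, and `φ(φ(s)) = s`. -/
theorem stmt19 (s : List Bool) (h : IsFareyND s) :
    IsFareyND (conj s) ∧
    conj s = false :: ((s.drop 1).dropLast.map (fun b => !b) ++ [true]) ∧
    conj (conj s) = s := by
  obtain ⟨m, k, hs, hpal, hLs, hk0, hk, hrev⟩ := farey_basics h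
  obtain ⟨⟨n, hn⟩, hlen⟩ := h
  have hmax := maxRot_eq_reverse ⟨⟨n, hn⟩, hlen⟩
  have hconj : conj s = reflectWord s.reverse := by rw [conj, hmax]
  have htmem : reflectWord s.reverse ∈ farey n := by
    have := sigma_mem_farey hn
    simpa [sigma] using this
  have htND : IsFareyND (reflectWord s.reverse) :=
    ⟨⟨n, htmem⟩, by simpa using hlen⟩
  refine ⟨by rw [hconj]; exact htND, ?_, ?_⟩
  · rw [hconj, hs]
    simp [List.reverse_cons, List.reverse_append, hpal, reflectWord, List.dropLast_concat]
  · rw [hconj, conj, maxRot_eq_reverse htND, ← reflect_reverse, List.reverse_reverse,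
      reflect_reflect]
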